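/- arXiv:2410.05807 — 2 statements merged into one kernel-verified Lean document; each statement's English description precedes it below -/
import Mathlib

section
/- Let G: ℝ^p → ℝ be differentiable and H(Ω, c_Ω)-smooth, where Ω = ‖·‖^r is a norm power function of order r > 1, c_Ω ≥ 0, and r* = r/(r−1). Let θ ∈ ℝ^p with ∇G(θ) ≠ 0, let α = (‖∇G(θ)‖₂² / (r·Ω(∇G(θ))))^{r*−1}, and let θ' = θ − α·∇G(θ). Then G(θ) − G(θ') ≥ (‖∇G(θ)‖₂²)^{r*} / (r*·(r·Ω(∇G(θ)))^{r*/r}) − c_Ω; that is, G(θ) − G(θ') ≥ ‖∇G(θ)‖_Ω^{r*} − c_Ω, where ‖x‖_Ω = r*^{−1/r*}·‖x‖₂²/Ω̄(x) and Ω̄(x) = (r·Ω(x))^{1/r}. Moreover, among gradient steps θ − α∇G(θ) this choice of α minimizes the smoothness upper bound −α‖∇G(θ)‖₂² + α^r·Ω(∇G(θ)) on G(θ') − G(θ). -/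
open scoped InnerProductSpace

/-- `N` is a norm on `ℝ^p`. -/
def IsNorm {p : ℕ} (N : EuclideanSpace ℝ (Fin p) → ℝ) : Prop :=
  N 0 = 0 ∧ (∀ x, x ≠ 0 → 0 < N x) ∧
    (∀ (a : ℝ) (x), N (a • x) = |a| * N x) ∧
    (∀ x y, N (x + y) ≤ N x + N y)

/-- The `Ω`-norm-like quantity `‖x‖_Ω = r*^{-1/r*} · ‖x‖₂² / Ω̄(x)`,
where `Ω̄(x) = (r·Ω(x))^{1/r}`. -/
noncomputable def normOmega {p : ℕ} (r rstar : ℝ) (Ω : EuclideanSpace ℝ (Fin p) → ℝ)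
    (x : EuclideanSpace ℝ (Fin p)) : ℝ :=
  rstar ^ (-(1 / rstar)) * ‖x‖ ^ 2 / (r * Ω x) ^ (1 / r)

theorem stmt11 {p : ℕ} (N : EuclideanSpace ℝ (Fin p) → ℝ) (hN : IsNorm N)
    (r : ℝ) (hr : 1 < r) (rstar : ℝ) (hrstar : rstar = r / (r - 1))
    (Ω : EuclideanSpace ℝ (Fin p) → ℝ) (hΩ : ∀ μ, Ω μ = N μ ^ r)
    (cΩ : ℝ) (hcΩ : 0 ≤ cΩ)
    (G : EuclideanSpace ℝ (Fin p) → ℝ) (hG : Differentiable ℝ G)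
    (hsmooth : ∀ μ ν : EuclideanSpace ℝ (Fin p),
      G μ - G ν - ⟪gradient G ν, μ - ν⟫_ℝ ≤ Ω (μ - ν) + cΩ)
    (θ : EuclideanSpace ℝ (Fin p)) (hgrad : gradient G θ ≠ 0)
    (α : ℝ) (hα : α = (‖gradient G θ‖ ^ 2 / (r * Ω (gradient G θ))) ^ (rstar - 1))
    (θ' : EuclideanSpace ℝ (Fin p)) (hθ' : θ' = θ - α • gradient G θ) :
    G θ - G θ' ≥
        (‖gradient G θ‖ ^ 2) ^ rstar / (rstar * (r * Ω (gradient G θ)) ^ (rstar / r)) - cΩ ∧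
    G θ - G θ' ≥ normOmega r rstar Ω (gradient G θ) ^ rstar - cΩ ∧
    (∀ β : ℝ, 0 < β →
      -α * ‖gradient G θ‖ ^ 2 + α ^ r * Ω (gradient G θ) ≤
        -β * ‖gradient G θ‖ ^ 2 + β ^ r * Ω (gradient G θ)) := by
  obtain ⟨hN0, hNpos, hNsmul, hNadd⟩ := hN
  set g := gradient G θ with hg
  have hr0 : (0:ℝ) < r := lt_trans one_pos hr
  have hr1 : (0:ℝ) < r - 1 := by linarith
  have hrs_pos : 0 < rstar := by rw [hrstar]; exact div_pos hr0 hr1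
  have hNg : 0 < N g := hNpos g hgrad
  have hΩg : 0 < Ω g := by rw [hΩ]; exact Real.rpow_pos_of_pos hNg r
  have hW : 0 < r * Ω g := mul_pos hr0 hΩg
  have hn : 0 < ‖g‖ ^ 2 := by have := norm_pos_iff.mpr hgrad; positivity
  set A := ‖g‖ ^ 2 / (r * Ω g) with hAdef
  have hA : 0 < A := div_pos hn hW
  have hα0 : 0 < α := by rw [hα]; exact Real.rpow_pos_of_pos hA _
  -- exponent identities
  have hrne : r ≠ 0 := hr0.ne'
  have hr1ne : r - 1 ≠ 0 := hr1.ne'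
  have hrsr : (rstar - 1) * r = rstar := by rw [hrstar]; field_simp; ring
  have hrs1 : rstar / r = rstar - 1 := by rw [hrstar]; field_simp; ring
  have hrr1 : (rstar - 1) * (r - 1) = 1 := by rw [hrstar]; field_simp; ring
  -- α ^ r = A ^ rstar
  have hαr : α ^ r = A ^ rstar := by
    rw [hα, ← Real.rpow_mul hA.le, hrsr]
  have hαr1v : α ^ (r - 1) = A := by
    rw [hα, ← Real.rpow_mul hA.le, hrr1, Real.rpow_one]
  have hrA : r * α ^ (r - 1) * Ω g = ‖g‖ ^ 2 := by
    rw [hαr1v, hAdef]; field_simp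
  -- smoothness step
  have hdiff : θ' - θ = (-α) • g := by
    rw [hθ', sub_sub_cancel_left, neg_smul]
  have hΩdiff : Ω (θ' - θ) = α ^ r * Ω g := by
    rw [hdiff, hΩ, hNsmul, abs_neg, abs_of_pos hα0,
      Real.mul_rpow hα0.le hNg.le, ← hΩ]
  have hinner : ⟪g, θ' - θ⟫_ℝ = -(α * ‖g‖ ^ 2) := by
    rw [hdiff, real_inner_smul_right, real_inner_self_eq_norm_sq]; ring
  have hstep : G θ - G θ' ≥ α * ‖g‖ ^ 2 - α ^ r * Ω g - cΩ := by
    have := hsmooth θ' θ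
    rw [hΩdiff, ← hg, hinner] at this
    linarith
  -- the key algebraic identity
  have hApow : A ^ rstar = A ^ (rstar - 1) * A := by
    have h : rstar = (rstar - 1) + 1 := by ring
    rw [h, Real.rpow_add hA, Real.rpow_one]; ring_nf
  have hdivpow : A ^ (rstar - 1) = (‖g‖ ^ 2) ^ (rstar - 1) / (r * Ω g) ^ (rstar - 1) := by
    rw [hAdef, Real.div_rpow hn.le hW.le]
  have hnpow : (‖g‖ ^ 2) ^ rstar = (‖g‖ ^ 2) ^ (rstar - 1) * ‖g‖ ^ 2 := by
    have h : rstar = (rstar - 1) + 1 := by ring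
    rw [h, Real.rpow_add hn, Real.rpow_one]; ring_nf
  have hWpos' : ((r * Ω g) ^ (rstar - 1) : ℝ) > 0 := Real.rpow_pos_of_pos hW _
  have hAΩ : A * Ω g = ‖g‖ ^ 2 / r := by rw [hAdef]; field_simp
  have e1 : α ^ r * Ω g = α * (‖g‖ ^ 2 / r) := by
    rw [hαr, hApow, ← hα, mul_assoc, hAΩ]
  have e2 : α * ‖g‖ ^ 2 - α * (‖g‖ ^ 2 / r) = α * ‖g‖ ^ 2 / rstar := by
    rw [hrstar]; field_simp
  have e3 : α * ‖g‖ ^ 2 = (‖g‖ ^ 2) ^ rstar / (r * Ω g) ^ (rstar - 1) := by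
    rw [hα, hdivpow, hnpow]; ring
  have hkey : α * ‖g‖ ^ 2 - α ^ r * Ω g
      = (‖g‖ ^ 2) ^ rstar / (rstar * (r * Ω g) ^ (rstar / r)) := by
    rw [hrs1, e1, e2, e3, div_div, mul_comm ((r * Ω g) ^ (rstar - 1)) rstar]
  constructor
  · rw [← hkey]; linarith
  constructor
  · -- second form equals the first
    have heq : normOmega r rstar Ω g ^ rstar
        = (‖g‖ ^ 2) ^ rstar / (rstar * (r * Ω g) ^ (rstar / r)) := by
      unfold normOmega
      have h1 : (0:ℝ) ≤ rstar ^ (-(1 / rstar)) * ‖g‖ ^ 2 := by positivity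
      rw [Real.div_rpow h1 (Real.rpow_nonneg hW.le _),
        Real.mul_rpow (Real.rpow_nonneg hrs_pos.le _) hn.le,
        ← Real.rpow_mul hrs_pos.le, ← Real.rpow_mul hW.le]
      have h2 : -(1 / rstar) * rstar = -1 := by field_simp
      have h3 : 1 / r * rstar = rstar / r := by ring
      rw [h2, h3, Real.rpow_neg_one]
      field_simp
    rw [heq, ← hkey]; linarith
  · intro β hβ
    -- Bernoulli: β^r ≥ α^r + r α^{r-1} (β - α)
    have hs : (-1:ℝ) ≤ β / α - 1 := by
      have : 0 < β / α := div_pos hβ hα0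
      linarith
    have hb := one_add_mul_self_le_rpow_one_add hs hr.le
    have h1s : 1 + (β / α - 1) = β / α := by ring
    rw [h1s] at hb
    have hdivr : (β / α) ^ r = β ^ r / α ^ r := Real.div_rpow hβ.le hα0.le r
    rw [hdivr] at hb
    have hαrpos : 0 < α ^ r := Real.rpow_pos_of_pos hα0 r
    have hαrr : α ^ r = α ^ (r - 1) * α := by
      have h : r = (r - 1) + 1 := by ring
      nth_rewrite 1 [h]
      rw [Real.rpow_add hα0, Real.rpow_one]
    have hbern : α ^ r + r * α ^ (r - 1) * (β - α) ≤ β ^ r := by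
      have := mul_le_mul_of_nonneg_left hb hαrpos.le
      have hcalc : α ^ r * (1 + r * (β / α - 1)) = α ^ r + r * α ^ (r - 1) * (β - α) := by
        rw [hαrr]; field_simp
      rw [hcalc] at this
      calc α ^ r + r * α ^ (r - 1) * (β - α) ≤ α ^ r * (β ^ r / α ^ r) := this
        _ = β ^ r := by field_simp
    have hmul := mul_le_mul_of_nonneg_right hbern hΩg.le
    have hexp : (α ^ r + r * α ^ (r - 1) * (β - α)) * Ω g
        = α ^ r * Ω g + ‖g‖ ^ 2 * (β - α) := by
      rw [add_mul]; congr 1; rw [← hrA]; ring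
    rw [hexp] at hmul
    linarith
end

section
/- Let s be a finite dataset of n samples with per-sample losses, and for a subset b ⊆ s let L(θ, b) = (1/|b|)·Σ_{z∈b} ℓ_z(θ) denote the batch empirical risk. Let L_*(s) be a lower bound with L_*(s) ≤ L(θ, s) for all θ. Fix a batch size m with 1 ≤ m ≤ n and batches s_0, s_1, …, s_{T−1} ⊆ s, each of size m. Assume each function θ ↦ L(θ, s_k) is differentiable and H(Ω, c_Ω)-smooth, where Ω = ‖·‖^r is a norm power function of order r > 1, c_Ω ≥ 0, r* = r/(r−1). Define the SGD iterates θ_{k+1} = θ_k − α_k·∇_θ L(θ_k, s_k) with α_k = (‖∇_θ L(θ_k, s_k)‖₂²/(r·Ω(∇_θ L(θ_k, s_k))))^{r*−1} (and ∇_θ L(θ_k, s_k) ≠ 0). Assume the gradient correlation bound: for each k, L(θ_{k+1}, s∖s_k) − L(θ_k, s∖s_k) ≤ M for some M ≥ 0. Then min_{0 ≤ k < T} ‖∇_θ L(θ_k, s_k)‖_Ω^{r*} ≤ (1/T)·Σ_{k=0}^{T−1} ‖∇_θ L(θ_k, s_k)‖_Ω^{r*} ≤ (n/(m·T))·(L(θ_0,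 s) − L_*(s)) + ((n−m)/m)·M + c_Ω, where ‖x‖_Ω = r*^{−1/r*}·‖x‖₂²/Ω̄(x) and Ω̄(x) = (r·Ω(x))^{1/r}. -/
open scoped InnerProductSpace

/-- The batch empirical risk `L(θ, b) = (1/|b|) ∑_{z ∈ b} ℓ_z(θ)`. -/
noncomputable def batchRisk {n p : ℕ} (ℓ : Fin n → EuclideanSpace ℝ (Fin p) → ℝ)
    (b : Finset (Fin n)) (θ : EuclideanSpace ℝ (Fin p)) : ℝ :=
  (1 / (b.card : ℝ)) * ∑ z ∈ b, ℓ z θ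

lemma rpow_key (r rstar : ℝ) (hr : 1 < r) (hrstar : rstar = r / (r - 1)) (x y : ℝ)
    (hx : 0 < x) (hy : 0 < y) :
    (rstar ^ (-(1 / rstar)) * x / y ^ (1 / r)) ^ rstar = (x / y) ^ (rstar - 1) * x / rstar := by
  have hr1 : (0:ℝ) < r - 1 := by linarith
  have hr0 : (0:ℝ) < r := by linarith
  have hrsp : 0 < rstar := by rw [hrstar]; positivity
  have hrsne : rstar ≠ 0 := ne_of_gt hrsp
  have hrsr : 1 / r * rstar = rstar - 1 := by rw [hrstar]; field_simp; ring
  have h1 : (rstar ^ (-(1 / rstar) : ℝ)) ^ rstar = rstar⁻¹ := by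
    rw [← Real.rpow_mul hrsp.le]
    rw [show -(1 / rstar) * rstar = -1 by field_simp]
    exact Real.rpow_neg_one rstar
  have h2 : (y ^ (1 / r : ℝ)) ^ rstar = y ^ (rstar - 1 : ℝ) := by
    rw [← Real.rpow_mul hy.le, hrsr]
  have h3 : x ^ rstar = x ^ (rstar - 1 : ℝ) * x := by
    rw [← Real.rpow_add_one hx.ne' (rstar - 1)]; ring_nf
  rw [Real.div_rpow (by positivity) (by positivity), Real.mul_rpow (by positivity) hx.le,
    h1, h2, h3, Real.div_rpow hx.le hy.le]
  field_simp

theorem stmt12 {n p : ℕ} (T m : ℕ) (hT : 0 < T) (hm : 1 ≤ m) (hmn : m ≤ n)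
    (ℓ : Fin n → EuclideanSpace ℝ (Fin p) → ℝ)
    (Lstar : ℝ) (hLstar : ∀ θ, Lstar ≤ batchRisk ℓ Finset.univ θ)
    (batch : ℕ → Finset (Fin n)) (hcard : ∀ k < T, (batch k).card = m)
    (N : EuclideanSpace ℝ (Fin p) → ℝ) (hN : IsNorm N)
    (r : ℝ) (hr : 1 < r) (rstar : ℝ) (hrstar : rstar = r / (r - 1))
    (Ω : EuclideanSpace ℝ (Fin p) → ℝ) (hΩ : ∀ μ, Ω μ = N μ ^ r)
    (cΩ : ℝ) (hcΩ : 0 ≤ cΩ)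
    (hdiff : ∀ k < T, Differentiable ℝ (batchRisk ℓ (batch k)))
    (hsmooth : ∀ k < T, ∀ μ ν : EuclideanSpace ℝ (Fin p),
      batchRisk ℓ (batch k) μ - batchRisk ℓ (batch k) ν -
          ⟪gradient (batchRisk ℓ (batch k)) ν, μ - ν⟫_ℝ ≤ Ω (μ - ν) + cΩ)
    (θseq : ℕ → EuclideanSpace ℝ (Fin p))
    (hgrad : ∀ k < T, gradient (batchRisk ℓ (batch k)) (θseq k) ≠ 0)
    (hstep : ∀ k < T, θseq (k + 1) = θseq k -
      ((‖gradient (batchRisk ℓ (batch k)) (θseq k)‖ ^ 2 /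
          (r * Ω (gradient (batchRisk ℓ (batch k)) (θseq k)))) ^ (rstar - 1)) •
        gradient (batchRisk ℓ (batch k)) (θseq k))
    (M : ℝ) (hM : 0 ≤ M)
    (hcorr : ∀ k < T,
      batchRisk ℓ (Finset.univ \ batch k) (θseq (k + 1)) -
        batchRisk ℓ (Finset.univ \ batch k) (θseq k) ≤ M) :
    (Finset.range T).inf' ⟨0, Finset.mem_range.mpr hT⟩
        (fun k => normOmega r rstar Ω (gradient (batchRisk ℓ (batch k)) (θseq k)) ^ rstar) ≤
      (1 / (T : ℝ)) * ∑ k ∈ Finset.range T,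
        normOmega r rstar Ω (gradient (batchRisk ℓ (batch k)) (θseq k)) ^ rstar ∧
    (1 / (T : ℝ)) * ∑ k ∈ Finset.range T,
        normOmega r rstar Ω (gradient (batchRisk ℓ (batch k)) (θseq k)) ^ rstar ≤
      ((n : ℝ) / ((m : ℝ) * (T : ℝ))) * (batchRisk ℓ Finset.univ (θseq 0) - Lstar) +
        (((n : ℝ) - (m : ℝ)) / (m : ℝ)) * M + cΩ := by
  have hr0 : (0:ℝ) < r := by linarith
  have hr1 : (0:ℝ) < r - 1 := by linarith
  have hrsp : 0 < rstar := by rw [hrstar]; positivity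
  have hm0 : (0:ℝ) < m := by exact_mod_cast hm
  have hn0 : (0:ℝ) < n := lt_of_lt_of_le hm0 (by exact_mod_cast hmn)
  have hT0 : (0:ℝ) < T := by exact_mod_cast hT
  set G : ℕ → ℝ := fun k =>
    normOmega r rstar Ω (gradient (batchRisk ℓ (batch k)) (θseq k)) ^ rstar with hG
  set Φ : ℕ → ℝ := fun j => batchRisk ℓ Finset.univ (θseq j) with hΦ
  -- smoothness per-step bound on the batch loss
  have hstep1 : ∀ k < T, G k ≤ batchRisk ℓ (batch k) (θseq k)
      - batchRisk ℓ (batch k) (θseq (k+1)) + cΩ := by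
    intro k hk
    set g := gradient (batchRisk ℓ (batch k)) (θseq k) with hg
    have hgne : g ≠ 0 := hgrad k hk
    have hNg : 0 < N g := hN.2.1 g hgne
    have hΩg : 0 < Ω g := by rw [hΩ]; positivity
    have hgn : 0 < ‖g‖ := norm_pos_iff.mpr hgne
    have hx : (0:ℝ) < ‖g‖ ^ 2 := by positivity
    have hy : (0:ℝ) < r * Ω g := by positivity
    set x : ℝ := ‖g‖ ^ 2 with hxdef
    set A : ℝ := x / (r * Ω g) with hA
    have hA0 : 0 < A := by positivity
    set α : ℝ := A ^ (rstar - 1) with hα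
    have hα0 : 0 < α := Real.rpow_pos_of_pos hA0 _
    have hstepk : θseq (k+1) = θseq k - α • g := hstep k hk
    have hdiffpt : θseq (k+1) - θseq k = -(α • g) := by
      rw [hstepk]; abel
    have hsm := hsmooth k hk (θseq (k+1)) (θseq k)
    rw [hdiffpt] at hsm
    have hinner : ⟪g, -(α • g)⟫_ℝ = -(α * x) := by
      rw [inner_neg_right, real_inner_smul_right, real_inner_self_eq_norm_sq]
    have hΩneg : Ω (-(α • g)) = α ^ r * Ω g := by
      rw [hΩ, ← neg_smul, hN.2.2.1, abs_neg, abs_of_nonneg hα0.le,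
        Real.mul_rpow hα0.le hNg.le, ← hΩ]
    have hαr : α ^ r * Ω g = α * x / r := by
      have e1 : (rstar - 1) * r = rstar := by
        rw [hrstar]; first | (field_simp; ring) | field_simp
      have e2 : A ^ rstar = A ^ (rstar - 1) * A := by
        rw [← Real.rpow_add_one hA0.ne' (rstar - 1)]; ring_nf
      rw [hα, ← Real.rpow_mul hA0.le, e1, e2, hA]
      field_simp
    have hGval : G k = α * x / rstar := by
      simp only [hG, ← hg, normOmega, ← hxdef]
      rw [rpow_key r rstar hr hrstar x (r * Ω g) hx hy, ← hA, ← hα]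
    have hrs1 : 1 - 1 / r = 1 / rstar := by rw [hrstar]; field_simp
    -- from hsm : L(θ_{k+1}) - L(θ_k) - ⟪g, -(α•g)⟫ ≤ Ω(-(α•g)) + cΩ
    rw [hinner, hΩneg, hαr] at hsm
    rw [hGval]
    have : α * x / rstar = α * x - α * x / r := by
      rw [eq_sub_iff_add_eq, div_add_div _ _ (ne_of_gt hrsp) (ne_of_gt hr0)]
      rw [show α * x * r + rstar * (α * x) = α * x * (r + rstar) by ring]
      rw [show rstar * r = r + rstar by
        rw [hrstar]; first | (field_simp; ring) | field_simp]
      rw [mul_div_assoc, div_self (by rw [hrstar]; positivity), mul_one]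
    linarith
  -- decomposition of the full risk
  have hdecomp : ∀ k < T, ∀ θ, (n:ℝ) * batchRisk ℓ Finset.univ θ =
      ((n:ℝ) - m) * batchRisk ℓ (Finset.univ \ batch k) θ + m * batchRisk ℓ (batch k) θ := by
    intro k hk θ
    have hbc : (batch k).card = m := hcard k hk
    have hcu : (Finset.univ : Finset (Fin n)).card = n := Finset.card_fin n
    have hcd : (Finset.univ \ batch k).card = n - m := by
      rw [Finset.card_sdiff_of_subset (Finset.subset_univ _), hcu, hbc]
    have hsplit : ∑ z ∈ Finset.univ \ batch k, ℓ z θ + ∑ z ∈ batch k, ℓ z θ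
        = ∑ z ∈ (Finset.univ : Finset (Fin n)), ℓ z θ :=
      Finset.sum_sdiff (Finset.subset_univ _)
    simp only [batchRisk, hbc, hcu, hcd]
    rcases eq_or_lt_of_le hmn with heq | hlt
    · have h0 : n - m = 0 := by omega
      have hbu : batch k = Finset.univ := Finset.eq_univ_of_card _ (by rw [hbc, heq, Fintype.card_fin])
      have : Finset.univ \ batch k = ∅ := by rw [hbu, Finset.sdiff_self]
      rw [this] at hsplit ⊢
      simp only [Finset.sum_empty, h0, zero_add] at hsplit ⊢
      have hmr : (m:ℝ) = n := by exact_mod_cast heq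
      rw [hbu, hmr]
      ring
    · have hnm : ((n - m : ℕ) : ℝ) = (n:ℝ) - m := by
        rw [Nat.cast_sub hmn]
      have hnm0 : (0:ℝ) < (n:ℝ) - m := by
        have : (m:ℝ) < n := by exact_mod_cast hlt
        linarith
      rw [hnm, ← hsplit]
      field_simp
      try ring
  -- per-step inequality for the full risk
  have hstep2 : ∀ k < T, (m:ℝ) * G k ≤ (n:ℝ) * (Φ k - Φ (k+1)) + m * cΩ + ((n:ℝ) - m) * M := by
    intro k hk
    have h1 := hstep1 k hk
    have h2 := hcorr k hk
    have hd1 := hdecomp k hk (θseq k)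
    have hd2 := hdecomp k hk (θseq (k+1))
    have hnm0 : (0:ℝ) ≤ (n:ℝ) - m := by
      have : (m:ℝ) ≤ n := by exact_mod_cast hmn
      linarith
    have h2' : ((n:ℝ) - m) * (batchRisk ℓ (Finset.univ \ batch k) (θseq (k + 1)) -
        batchRisk ℓ (Finset.univ \ batch k) (θseq k)) ≤ ((n:ℝ) - m) * M :=
      mul_le_mul_of_nonneg_left h2 hnm0
    have h1' : (m:ℝ) * G k ≤ m * (batchRisk ℓ (batch k) (θseq k)
        - batchRisk ℓ (batch k) (θseq (k+1)) + cΩ) := mul_le_mul_of_nonneg_left h1 hm0.le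
    simp only [hΦ]
    nlinarith [h1', h2', hd1, hd2]
  -- sum it up
  have hsum : (m:ℝ) * ∑ k ∈ Finset.range T, G k ≤
      (n:ℝ) * (Φ 0 - Lstar) + T * (m * cΩ) + T * (((n:ℝ) - m) * M) := by
    have hsum1 : ∑ k ∈ Finset.range T, (m:ℝ) * G k ≤
        ∑ k ∈ Finset.range T, ((n:ℝ) * (Φ k - Φ (k+1)) + m * cΩ + ((n:ℝ) - m) * M) :=
      Finset.sum_le_sum fun k hk => hstep2 k (Finset.mem_range.mp hk)
    rw [← Finset.mul_sum] at hsum1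
    rw [Finset.sum_add_distrib, Finset.sum_add_distrib, ← Finset.mul_sum,
      Finset.sum_range_sub' Φ, Finset.sum_const, Finset.card_range, nsmul_eq_mul,
      Finset.sum_const, Finset.card_range, nsmul_eq_mul] at hsum1
    have hLT : Lstar ≤ Φ T := hLstar (θseq T)
    nlinarith [hsum1]
  constructor
  · -- inf' ≤ average
    set S := ∑ k ∈ Finset.range T, G k with hS
    set I := (Finset.range T).inf' ⟨0, Finset.mem_range.mpr hT⟩ G with hI
    have hle : (T:ℝ) * I ≤ S := by
      calc (T:ℝ) * I = ∑ _k ∈ Finset.range T, I := by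
            rw [Finset.sum_const, Finset.card_range, nsmul_eq_mul]
        _ ≤ S := Finset.sum_le_sum fun k hk => Finset.inf'_le G hk
    rw [one_div, inv_mul_eq_div, le_div_iff₀ hT0]
    linarith
  · -- the main bound
    set S := ∑ k ∈ Finset.range T, G k with hS
    have hmT : (0:ℝ) < (m:ℝ) * T := by positivity
    calc (1 / (T:ℝ)) * S = ((m:ℝ) * S) / ((m:ℝ) * T) := by
          field_simp
      _ ≤ ((n:ℝ) * (Φ 0 - Lstar) + T * (m * cΩ) + T * (((n:ℝ) - m) * M)) / ((m:ℝ) * T) := by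
          exact (div_le_div_iff_of_pos_right hmT).mpr hsum
      _ = ((n : ℝ) / ((m : ℝ) * (T : ℝ))) * (Φ 0 - Lstar) +
            (((n : ℝ) - (m : ℝ)) / (m : ℝ)) * M + cΩ := by
          field_simp
          ring
end
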